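/- arXiv:2006.09371 — 3 statements merged into one kernel-verified Lean document; each statement's English description precedes it below -/
import Mathlib

section
/- Let I be a maximal (two-sided) ideal of R. Then either MI = M or MI is a φ-prime submodule of M. -/
open MulOpposite Submodule

variable {R : Type*} [Ring R] {M : Type*} [AddCommGroup M] [Module Rᵐᵒᵖ M]

/-- The product `Y·A` of a set of elements of a right `R`-module `M` and a set of ring
elements: the submodule of all finite sums `Σ yᵢ·aᵢ` with `yᵢ ∈ Y`, `aᵢ ∈ A`. -/
def sProd (Y : Set M) (A : Set R) : Submodule Rᵐᵒᵖ M :=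
  Submodule.span Rᵐᵒᵖ {z | ∃ y ∈ Y, ∃ a ∈ A, z = op a • y}

/-- `(X :_R N) = {r : R | N·r ⊆ X}`. -/
def colR (X : Set M) (N : Set M) : Set R := {r | ∀ m ∈ N, op r • m ∈ X}

/-- `(X :_M A) = {m : M | m·A ⊆ X}`. -/
def colM (X : Set M) (A : Set R) : Set M := {m | ∀ r ∈ A, op r • m ∈ X}

/-- A function `φ : S(M) → S(M) ∪ {∅}` (values are either `∅` or submodules) with
`φ(X) ⊆ X` for every submodule `X`. -/
def GoodPhi (φ : Submodule Rᵐᵒᵖ M → Set M) : Prop :=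
  ∀ N : Submodule Rᵐᵒᵖ M, φ N ⊆ N ∧
    (φ N = (∅ : Set M) ∨ ∃ P : Submodule Rᵐᵒᵖ M, φ N = (P : Set M))

/-- `X` is a φ-prime submodule of the right `R`-module `M`. -/
def PhiPrime (φ : Submodule Rᵐᵒᵖ M → Set M) (X : Submodule Rᵐᵒᵖ M) : Prop :=
  X ≠ ⊤ ∧ ∀ (Y : Submodule Rᵐᵒᵖ M) (I : TwoSidedIdeal R),
    (sProd (Y : Set M) (I : Set R) : Set M) ⊆ (X : Set M) →
    ¬((sProd (Y : Set M) (I : Set R) : Set M) ⊆ φ X) →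
    (Y : Set M) ⊆ (X : Set M) ∨ (I : Set R) ⊆ colR (X : Set M) Set.univ

/-- `X` is a prime submodule of the right `R`-module `M`. -/
def PrimeSub (X : Submodule Rᵐᵒᵖ M) : Prop :=
  X ≠ ⊤ ∧ ∀ (Y : Submodule Rᵐᵒᵖ M) (I : TwoSidedIdeal R),
    (sProd (Y : Set M) (I : Set R) : Set M) ⊆ (X : Set M) →
    (Y : Set M) ⊆ (X : Set M) ∨ (I : Set R) ⊆ colR (X : Set M) Set.univ

/-- `X` is a weakly prime submodule of the right `R`-module `M`. -/
def WeaklyPrime (X : Submodule Rᵐᵒᵖ M) : Prop :=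
  X ≠ ⊤ ∧ ∀ (Y : Submodule Rᵐᵒᵖ M) (I : TwoSidedIdeal R),
    sProd (Y : Set M) (I : Set R) ≠ ⊥ →
    (sProd (Y : Set M) (I : Set R) : Set M) ⊆ (X : Set M) →
    (Y : Set M) ⊆ (X : Set M) ∨ (I : Set R) ⊆ colR (X : Set M) Set.univ

/-- `X` is an almost prime submodule of the right `R`-module `M`. -/
def AlmostPrime (X : Submodule Rᵐᵒᵖ M) : Prop :=
  X ≠ ⊤ ∧ ∀ (Y : Submodule Rᵐᵒᵖ M) (I : TwoSidedIdeal R),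
    (sProd (Y : Set M) (I : Set R) : Set M) ⊆ (X : Set M) →
    ¬((sProd (Y : Set M) (I : Set R) : Set M) ⊆
        (sProd (X : Set M) ((colR (X : Set M) Set.univ : Set R)) : Set M)) →
    (Y : Set M) ⊆ (X : Set M) ∨ (I : Set R) ⊆ colR (X : Set M) Set.univ

/-- `powAct X n = X (X :_R M)ⁿ`. -/
def powAct (X : Submodule Rᵐᵒᵖ M) : ℕ → Submodule Rᵐᵒᵖ M
  | 0 => X
  | n + 1 => sProd (powAct X n : Set M) ((colR (X : Set M) Set.univ : Set R))

/-- The product of two sets of ring elements: all finite sums `Σ aᵢbᵢ`, `aᵢ ∈ A`, `bᵢ ∈ B`. -/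
def idMul (A B : Set R) : Set R :=
  (AddSubmonoid.closure {x | ∃ a ∈ A, ∃ b ∈ B, x = a * b} : AddSubmonoid R)

/-- A prime (two-sided) ideal of a possibly noncommutative ring. -/
def TIPrime (P : TwoSidedIdeal R) : Prop :=
  (P : Set R) ≠ Set.univ ∧ ∀ I J : TwoSidedIdeal R,
    idMul (I : Set R) (J : Set R) ⊆ (P : Set R) →
    (I : Set R) ⊆ (P : Set R) ∨ (J : Set R) ⊆ (P : Set R)

/-- The radical `√A`: the intersection of all prime two-sided ideals containing `A`. -/
def radSet (A : Set R) : Set R :=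
  {x | ∀ P : TwoSidedIdeal R, TIPrime P → A ⊆ (P : Set R) → x ∈ (P : Set R)}

/-- A ψ-prime two-sided ideal of a possibly noncommutative ring. -/
def PsiPrime (ψ : TwoSidedIdeal R → Set R) (A : TwoSidedIdeal R) : Prop :=
  (A : Set R) ≠ Set.univ ∧ ∀ I J : TwoSidedIdeal R,
    idMul (I : Set R) (J : Set R) ⊆ (A : Set R) →
    ¬(idMul (I : Set R) (J : Set R) ⊆ ψ A) →
    (I : Set R) ⊆ (A : Set R) ∨ (J : Set R) ⊆ (A : Set R)

/-- The induced function `φ_Y` on submodules of `M/Y`: `φ_Y(X/Y) = (φ(X)+Y)/Y`. -/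
def phiQuot (φ : Submodule Rᵐᵒᵖ M → Set M) (Y : Submodule Rᵐᵒᵖ M) :
    Submodule Rᵐᵒᵖ (M ⧸ Y) → Set (M ⧸ Y) :=
  fun Q => Y.mkQ '' (φ (Q.comap Y.mkQ))

/-- The colon `(X :_R Y)` of two submodules, as a two-sided ideal of `R`. -/
def colTI (X Y : Submodule Rᵐᵒᵖ M) : TwoSidedIdeal R :=
  TwoSidedIdeal.mk' (colR (X : Set M) (Y : Set M))
    (by intro m hm; simp)
    (by intro x y hx hy m hm
        rw [op_add, add_smul]
        exact X.add_mem (hx m hm) (hy m hm))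
    (by intro x hx m hm
        rw [op_neg, neg_smul]
        exact X.neg_mem (hx m hm))
    (by intro x y hy m hm
        rw [op_mul, mul_smul]
        exact hy _ (Y.smul_mem (op x) hm))
    (by intro x y hx m hm
        rw [op_mul, mul_smul]
        exact X.smul_mem (op y) (hx m hm))

/-- The colon `(X :_M I)` as a submodule of `M`, for a two-sided ideal `I`. -/
def colMS (X : Submodule Rᵐᵒᵖ M) (I : TwoSidedIdeal R) : Submodule Rᵐᵒᵖ M where
  carrier := colM (X : Set M) (I : Set R)
  add_mem' := by
    intro a b ha hb r hr
    rw [smul_add]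
    exact X.add_mem (ha r hr) (hb r hr)
  zero_mem' := by
    intro r hr
    rw [smul_zero]
    exact X.zero_mem
  smul_mem' := by
    intro c m hm r hr
    rw [← mul_smul, show op r * c = op (unop c * r) from by rw [op_mul, op_unop]]
    exact hm _ (I.mul_mem_left _ _ hr)

/-- `M` is a multiplication right `R`-module: every submodule `X` equals `M(X :_R M)`. -/
def IsMultiplication (R : Type*) [Ring R] (M : Type*) [AddCommGroup M]
    [Module Rᵐᵒᵖ M] : Prop :=
  ∀ X : Submodule Rᵐᵒᵖ M, X = sProd (Set.univ : Set M) ((colR (X : Set M) Set.univ : Set R))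

/-- The product `XY = M(X :_R M)(Y :_R M)` of two submodules of a multiplication module. -/
def mprod (X Y : Submodule Rᵐᵒᵖ M) : Submodule Rᵐᵒᵖ M :=
  sProd ((sProd (Set.univ : Set M) ((colR (X : Set M) Set.univ : Set R)) : Submodule Rᵐᵒᵖ M) : Set M)
    ((colR (Y : Set M) Set.univ : Set R))

/-- A φ-m-system in a right `R`-module `M`. -/
def PhiMSystem (φ : Submodule Rᵐᵒᵖ M → Set M) (S : Set M) : Prop :=
  S.Nonempty ∧ ∀ (Y₁ Y₂ : Submodule Rᵐᵒᵖ M) (I : TwoSidedIdeal R),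
    ((Y₁ ⊔ Y₂ : Submodule Rᵐᵒᵖ M) : Set M) ∩ S ≠ ∅ →
    ((Y₁ ⊔ sProd (Set.univ : Set M) (I : Set R) : Submodule Rᵐᵒᵖ M) : Set M) ∩ S ≠ ∅ →
    ¬((sProd (Y₂ : Set M) (I : Set R) : Set M) ⊆ φ (Submodule.span Rᵐᵒᵖ Sᶜ)) →
    ((Y₁ ⊔ sProd (Y₂ : Set M) (I : Set R) : Submodule Rᵐᵒᵖ M) : Set M) ∩ S ≠ ∅

/-! Since `I ⊆ (MI :_R M)` and `I` is maximal, an ideal `J ⊄ (MI :_R M)` gives `1 = c + b` with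
`Mc ⊆ MI` and `b ∈ J`; then every `y ∈ Y` with `YJ ⊆ MI` is `yc + yb ∈ MI`. -/

theorem mem_colTI {X Y : Submodule Rᵐᵒᵖ M} {r : R} :
    r ∈ colTI X Y ↔ ∀ m ∈ Y, op r • m ∈ X :=
  TwoSidedIdeal.mem_mk' _ _ _ _ _ _ _

theorem le_colTI_sProd_univ (I : TwoSidedIdeal R) :
    I ≤ colTI (sProd (Set.univ : Set M) (I : Set R)) ⊤ :=
  fun r hr => mem_colTI.mpr fun m _ => subset_span ⟨m, trivial, r, hr, rfl⟩

theorem le_of_sProd_le_of_colTI_sup_eq_top {X Y : Submodule Rᵐᵒᵖ M} {J : TwoSidedIdeal R}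
    (hsup : colTI X ⊤ ⊔ J = ⊤) (hYJ : sProd (Y : Set M) (J : Set R) ≤ X) : Y ≤ X := by
  obtain ⟨c, hc, b, hb, hcb⟩ := TwoSidedIdeal.mem_sup.mp (hsup ▸ TwoSidedIdeal.mem_top (R := R))
  intro y hy
  have hy_split : y = op c • y + op b • y := by
    rw [← add_smul, ← op_add, hcb, op_one, one_smul]
  rw [hy_split]
  exact X.add_mem (mem_colTI.mp hc y trivial) (hYJ (subset_span ⟨y, hy, b, hb, rfl⟩))

theorem TwoSidedIdeal.sup_eq_top_of_maximal {I A J : TwoSidedIdeal R}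
    (hmax : ∀ K : TwoSidedIdeal R, (I : Set R) ⊂ (K : Set R) → (K : Set R) = Set.univ)
    (hIA : I ≤ A) (hJA : ¬J ≤ A) : A ⊔ J = ⊤ := by
  have hI_lt : I < A ⊔ J :=
    lt_of_le_not_ge (hIA.trans le_sup_left) fun h => hJA (le_sup_right.trans h |>.trans hIA)
  exact SetLike.coe_injective (hmax _ (SetLike.coe_ssubset_coe.mpr hI_lt))

theorem stmt_13_general (φ : Submodule Rᵐᵒᵖ M → Set M)
    (I : TwoSidedIdeal R)
    (hmax : ∀ J : TwoSidedIdeal R, (I : Set R) ⊂ (J : Set R) → (J : Set R) = Set.univ) :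
    sProd (Set.univ : Set M) (I : Set R) = ⊤ ∨
      PhiPrime φ (sProd (Set.univ : Set M) (I : Set R)) := by
  by_cases htop : sProd (Set.univ : Set M) (I : Set R) = ⊤
  · exact Or.inl htop
  refine Or.inr ⟨htop, fun Y J hYJ _ => ?_⟩
  by_cases hJ : J ≤ colTI (sProd (Set.univ : Set M) (I : Set R)) ⊤
  · exact Or.inr fun r hr => mem_colTI.mp (hJ hr)
  exact Or.inl <| le_of_sProd_le_of_colTI_sup_eq_top
    (TwoSidedIdeal.sup_eq_top_of_maximal hmax (le_colTI_sProd_univ I) hJ) hYJ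

/-- Let `I` be a maximal (two-sided) ideal of `R`. Then either
`MI = M` or `MI` is a φ-prime submodule of `M`. -/
theorem stmt_13 (φ : Submodule Rᵐᵒᵖ M → Set M) (hφ : GoodPhi φ)
    (I : TwoSidedIdeal R) (hproper : (I : Set R) ≠ Set.univ)
    (hmax : ∀ J : TwoSidedIdeal R, (I : Set R) ⊂ (J : Set R) → (J : Set R) = Set.univ) :
    sProd (Set.univ : Set M) (I : Set R) = ⊤ ∨
      PhiPrime φ (sProd (Set.univ : Set M) (I : Set R)) :=
  stmt_13_general φ I hmax
end

section
/- Let X be a proper submodule of M and ψ : S(R) → S(R) ∪ {∅} a function. If X is a φ-prime submodule of M, then for every submodule Y of M with Y ⊄ X and (φ(X):_R Y) ⊆ ψ((X:_R Y)), the ideal (X:_R Y) is a ψ-prime ideal of R. -/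
open MulOpposite Submodule

variable {R : Type*} [Ring R] {M : Type*} [AddCommGroup M] [Module Rᵐᵒᵖ M]

/-! If `IJ ⊆ (X :_R Y)` then `(YI)J ⊆ X`, while `(YI)J ⊄ φ(X)` since otherwise
`IJ ⊆ (φ(X) :_R Y) ⊆ ψ((X :_R Y))`. Applying φ-primeness of `X` to the submodule `YI` and the
ideal `J` gives `YI ⊆ X`, i.e. `I ⊆ (X :_R Y)`, or `J ⊆ (X :_R M) ⊆ (X :_R Y)`. -/

lemma coe_colTI (X Y : Submodule Rᵐᵒᵖ M) : (colTI X Y : Set R) = colR (X : Set M) (Y : Set M) :=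
  Set.ext fun _ => TwoSidedIdeal.mem_mk' _ _ _ _ _ _ _

lemma mem_idMul_of_mem {A B : Set R} {a b : R} (ha : a ∈ A) (hb : b ∈ B) : a * b ∈ idMul A B :=
  AddSubmonoid.subset_closure ⟨a, ha, b, hb, rfl⟩

lemma smul_mem_sProd {Y : Set M} {A : Set R} {y : M} {a : R} (hy : y ∈ Y) (ha : a ∈ A) :
    op a • y ∈ sProd Y A :=
  Submodule.subset_span ⟨y, hy, a, ha, rfl⟩

lemma sProd_le_iff {Y : Set M} {A : Set R} {N : Submodule Rᵐᵒᵖ M} :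
    sProd Y A ≤ N ↔ ∀ y ∈ Y, ∀ a ∈ A, op a • y ∈ N := by
  rw [sProd, Submodule.span_le]
  constructor
  · exact fun h y hy a ha => h ⟨y, hy, a, ha, rfl⟩
  · rintro h _ ⟨y, hy, a, ha, rfl⟩
    exact h y hy a ha

lemma one_mem_colR_iff {X N : Set M} : (1 : R) ∈ colR X N ↔ N ⊆ X := by
  simp only [colR, Set.mem_ofPred_eq, op_one, one_smul, Set.subset_def]

lemma colR_ne_univ {X N : Set M} (h : ¬N ⊆ X) : colR X N ≠ (Set.univ : Set R) :=
  fun hu => h (one_mem_colR_iff.1 (hu ▸ Set.mem_univ 1))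

lemma colR_mono_left {X X' : Set M} (h : X ⊆ X') (N : Set M) : (colR X N : Set R) ⊆ colR X' N :=
  fun _ hr m hm => h (hr m hm)

lemma colR_anti_right (X : Set M) {N N' : Set M} (h : N ⊆ N') : (colR X N' : Set R) ⊆ colR X N :=
  fun _ hr m hm => hr m (h hm)

lemma subset_colR_of_sProd_le {Y : Set M} {A : Set R} {X : Submodule Rᵐᵒᵖ M}
    (h : sProd Y A ≤ X) : A ⊆ colR (X : Set M) Y :=
  fun _ ha _ hy => h (smul_mem_sProd hy ha)

lemma sProd_sProd_le {Y : Set M} {I : Set R} {J : TwoSidedIdeal R} {X : Submodule Rᵐᵒᵖ M}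
    (h : idMul I (J : Set R) ⊆ colR (X : Set M) Y) : sProd (sProd Y I : Set M) J ≤ X := by
  rw [sProd_le_iff]
  suffices sProd Y I ≤ colMS X J from fun z hz => this hz
  rw [sProd_le_iff]
  intro y hy a ha b hb
  rw [← mul_smul, ← op_mul]
  exact h (mem_idMul_of_mem ha hb) y hy

lemma idMul_subset_colR_sProd_sProd (Y : Set M) (I J : Set R) :
    idMul I J ⊆ colR (sProd (sProd Y I : Set M) J : Set M) Y := by
  intro x hx m hm
  induction hx using AddSubmonoid.closure_induction with
  | mem _ hab =>
    obtain ⟨a, ha, b, hb, rfl⟩ := hab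
    rw [op_mul, mul_smul]
    exact smul_mem_sProd (smul_mem_sProd hm ha) hb
  | zero => rw [op_zero, zero_smul]; exact Submodule.zero_mem _
  | add u v _ _ hu hv => rw [op_add, add_smul]; exact Submodule.add_mem _ hu hv

theorem stmt_14_general (φ : Submodule Rᵐᵒᵖ M → Set M)
    (ψ : TwoSidedIdeal R → Set R)
    (X : Submodule Rᵐᵒᵖ M) (hXp : PhiPrime φ X) :
    ∀ Y : Submodule Rᵐᵒᵖ M, ¬((Y : Set M) ⊆ (X : Set M)) →
      (colR (φ X) (Y : Set M) : Set R) ⊆ ψ (colTI X Y) →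
      PsiPrime ψ (colTI X Y) := by
  intro Y hYX hψ
  refine ⟨?_, fun I J hIJ hnψ => ?_⟩
  · rw [coe_colTI]
    exact colR_ne_univ hYX
  rw [coe_colTI] at hIJ ⊢
  set YIJ := sProd (sProd (Y : Set M) (I : Set R) : Set M) (J : Set R)
  have hYIJ_le : YIJ ≤ X := sProd_sProd_le hIJ
  have hYIJ_not_le : ¬(YIJ : Set M) ⊆ φ X := fun h =>
    hnψ ((idMul_subset_colR_sProd_sProd (Y : Set M) (I : Set R) (J : Set R)).trans
      ((colR_mono_left h _).trans hψ))
  rcases hXp.2 _ J (SetLike.coe_subset_coe.2 hYIJ_le) hYIJ_not_le with hYI | hJ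
  · exact Or.inl (subset_colR_of_sProd_le (SetLike.coe_subset_coe.1 hYI))
  · exact Or.inr (hJ.trans (colR_anti_right _ (Set.subset_univ _)))

/-- Let `X` be a proper submodule of `M` and
`ψ : S(R) → S(R) ∪ {∅}`. If `X` is φ-prime, then for every submodule `Y ⊄ X` with
`(φ(X) :_R Y) ⊆ ψ((X :_R Y))`, the ideal `(X :_R Y)` is a ψ-prime ideal of `R`. -/
theorem stmt_14 (φ : Submodule Rᵐᵒᵖ M → Set M) (hφ : GoodPhi φ)
    (ψ : TwoSidedIdeal R → Set R)
    (X : Submodule Rᵐᵒᵖ M) (hXp : PhiPrime φ X) :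
    ∀ Y : Submodule Rᵐᵒᵖ M, ¬((Y : Set M) ⊆ (X : Set M)) →
      (colR (φ X) (Y : Set M) : Set R) ⊆ ψ (colTI X Y) →
      PsiPrime ψ (colTI X Y) :=
  stmt_14_general φ ψ X hXp
end

section
/- Let M be a multiplication R-module and X a φ-prime submodule of M. Then for all submodules Y₁, Y₂ of M, if Y₁Y₂ ⊆ X and Y₁Y₂ ⊄ φ(X), then Y₁ ⊆ X or Y₂ ⊆ X. -/
open MulOpposite Submodule

variable {R : Type*} [Ring R] {M : Type*} [AddCommGroup M] [Module Rᵐᵒᵖ M]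

/-! In a multiplication module `Y₁Y₂ = M(Y₁ :_R M)(Y₂ :_R M) = Y₁(Y₂ :_R M)`, so the hypothesis on
`Y₁Y₂` is the φ-prime hypothesis for `Y₁` and the ideal `(Y₂ :_R M)`. It yields `Y₁ ⊆ X` or
`(Y₂ :_R M) ⊆ (X :_R M)`, and in a multiplication module the latter means `Y₂ ⊆ X`. -/

theorem sProd_univ_le_iff (A : Set R) (X : Submodule Rᵐᵒᵖ M) :
    sProd (Set.univ : Set M) A ≤ X ↔ A ⊆ colR (X : Set M) Set.univ := by
  refine ⟨fun h a ha m _ => h (subset_span ⟨m, trivial, a, ha, rfl⟩), fun h => ?_⟩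
  rw [sProd, span_le]
  rintro _ ⟨m, -, a, ha, rfl⟩
  exact h ha m trivial

theorem coe_colTI_top (Y : Submodule Rᵐᵒᵖ M) :
    (colTI Y ⊤ : Set R) = colR (Y : Set M) Set.univ := by
  ext r
  simp [colTI, colR]

namespace IsMultiplication

theorem le_iff_colR_subset (hm : IsMultiplication R M) {X Y : Submodule Rᵐᵒᵖ M} :
    Y ≤ X ↔ (colR (Y : Set M) Set.univ : Set R) ⊆ colR (X : Set M) Set.univ := by
  refine ⟨fun h r hr m _ => h (hr m trivial), fun h => ?_⟩
  rw [hm Y]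
  exact (sProd_univ_le_iff _ X).2 h

theorem mprod_eq_sProd (hm : IsMultiplication R M) (Y₁ Y₂ : Submodule Rᵐᵒᵖ M) :
    mprod Y₁ Y₂ = sProd (Y₁ : Set M) (colTI Y₂ ⊤ : Set R) := by
  rw [mprod, ← hm Y₁, coe_colTI_top]

end IsMultiplication

theorem stmt_15_general (hm : IsMultiplication R M)
    (φ : Submodule Rᵐᵒᵖ M → Set M)
    (X : Submodule Rᵐᵒᵖ M) (hX : PhiPrime φ X) :
    ∀ Y₁ Y₂ : Submodule Rᵐᵒᵖ M,
      (mprod Y₁ Y₂ : Set M) ⊆ (X : Set M) →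
      ¬((mprod Y₁ Y₂ : Set M) ⊆ φ X) →
      (Y₁ : Set M) ⊆ (X : Set M) ∨ (Y₂ : Set M) ⊆ (X : Set M) := by
  intro Y₁ Y₂ hsub hnsub
  rw [IsMultiplication.mprod_eq_sProd hm] at hsub hnsub
  refine (hX.2 Y₁ (colTI Y₂ ⊤) hsub hnsub).imp id fun hcol => ?_
  rw [coe_colTI_top] at hcol
  exact (IsMultiplication.le_iff_colR_subset hm).2 hcol

/-- Let `M` be a multiplication module and `X` a φ-prime submodule
of `M`. Then for all submodules `Y₁, Y₂` of `M`, if `Y₁Y₂ ⊆ X` and `Y₁Y₂ ⊄ φ(X)`,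
then `Y₁ ⊆ X` or `Y₂ ⊆ X`. -/
theorem stmt_15 (hm : IsMultiplication R M)
    (φ : Submodule Rᵐᵒᵖ M → Set M) (hφ : GoodPhi φ)
    (X : Submodule Rᵐᵒᵖ M) (hX : PhiPrime φ X) :
    ∀ Y₁ Y₂ : Submodule Rᵐᵒᵖ M,
      (mprod Y₁ Y₂ : Set M) ⊆ (X : Set M) →
      ¬((mprod Y₁ Y₂ : Set M) ⊆ φ X) →
      (Y₁ : Set M) ⊆ (X : Set M) ∨ (Y₂ : Set M) ⊆ (X : Set M) :=
  stmt_15_general hm φ X hX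
end
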